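/- Let E be a finite-dimensional complex vector space with a nondegenerate symmetric bilinear form Q, let V ⊆ E be a subspace with Q|_{V×V} = 0, and let E₊ ⊆ E be a real subspace such that Q restricted to E₊ is real-valued and positive definite, with real dimension of E₊ equal to the complex dimension of E. Suppose κ : A → E is any function with image contained in V (A an arbitrary type). If π₊ ∘ κ = 0, where π₊ : E → E₊ is the projection along the complementary real subspace i·E₊, then κ = 0. -/
import Mathlib

/-- Vanishing mechanism: let `E` be a finite-dimensional complex vector space with a
nondegenerate symmetric bilinear form `Q`, `V ⊆ E` a `Q`-isotropic complex subspace, and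
`E₊` a real subspace on which `Q` is real-valued and positive definite with
`dim_ℝ E₊ = dim_ℂ E`, so that `E = E₊ ⊕ i·E₊`. If `κ : A → E` has image in `V` and its
projection `π₊ ∘ κ` to `E₊` (along `i·E₊`) vanishes, then `κ = 0`. -/
theorem stmt_3 {E A : Type*} [AddCommGroup E] [Module ℂ E] [FiniteDimensional ℂ E]
    (Q : E →ₗ[ℂ] E →ₗ[ℂ] ℂ)
    (hsymm : ∀ x y : E, Q x y = Q y x)
    (hnd : ∀ x : E, (∀ y : E, Q x y = 0) → x = 0)
    (V : Submodule ℂ E)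
    (hV : ∀ x ∈ V, ∀ y ∈ V, Q x y = 0)
    (Eplus : Submodule ℝ E)
    (hreal : ∀ x ∈ Eplus, (Q x x).im = 0)
    (hpos : ∀ x ∈ Eplus, 0 ≤ (Q x x).re)
    (hdef : ∀ x ∈ Eplus, Q x x = 0 → x = 0)
    (hdim : Module.finrank ℝ Eplus = Module.finrank ℂ E)
    (πp : E → E)
    (hπmem : ∀ x : E, πp x ∈ Eplus)
    (hπid : ∀ x ∈ Eplus, πp x = x)
    (hdecomp : ∀ x : E, ∃ b ∈ Eplus, x = πp x + Complex.I • b)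
    (κ : A → E) (hκ : ∀ a : A, κ a ∈ V)
    (h0 : ∀ a : A, πp (κ a) = 0) :
    ∀ a : A, κ a = 0 := by
  intro a
  obtain ⟨b, hb, hx⟩ := hdecomp (κ a)
  rw [h0 a, zero_add] at hx
  have hq : Q (κ a) (κ a) = 0 := hV _ (hκ a) _ (hκ a)
  rw [hx] at hq
  simp only [map_smul, LinearMap.smul_apply, smul_eq_mul] at hq
  have hbb : Q b b = 0 := by
    have : Complex.I * (Complex.I * Q b b) = -(Q b b) := by
      rw [← mul_assoc, Complex.I_mul_I]; ring
    rw [this, neg_eq_zero] at hq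
    exact hq
  rw [hx, hdef b hb hbb, smul_zero]
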